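/- Let ν ∈ (0,1], μ > 0, n₀ ≥ 1, and E_ν the Mittag-Leffler function E_{ν,1}. For 1 ≤ k ≤ n₀ define the sublinear state probabilities 𝔭_k^ν(t) = ∑_{l=0}^{n₀-k} C(n₀-k, l)(-1)^l E_ν(-(l+1) μ t^ν), and define the extinction probability 𝔭_0^ν(t) = ∑_{l=0}^{n₀} C(n₀,l)(-1)^l E_ν(-l μ t^ν). Then ∑_{k=0}^{n₀} 𝔭_k^ν(t) = 1 for all t > 0. -/

import Mathlib

/-!
Writing `j = n - k` and summing the hockey-stick identity `∑_{l ≤ j < n} C(j, l) = C(n, l+1)`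
(Pascal's rule, by induction on `n`) turns the sublinear probabilities into
`∑_{l<n} C(n, l+1) (-1)^l E(-(l+1) μ t^ν)`, which cancels the extinction probability
term by term except for its `l = 0` summand `E 0 = 1`.
-/

open Finset

theorem Finset.sum_Icc_one_sub {M : Type*} [AddCommMonoid M] (n : ℕ) (F : ℕ → M) :
    ∑ k ∈ Icc 1 n, F (n - k) = ∑ j ∈ range n, F j :=
  sum_nbij' (fun k => n - k) (fun j => n - j)
    (by intro k hk; simp only [mem_Icc, mem_range] at *; omega)
    (by intro j hj; simp only [mem_Icc, mem_range] at *; omega)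
    (by intro k hk; simp only [mem_Icc] at hk; omega)
    (by intro j hj; simp only [mem_range] at hj; omega)
    (fun _ _ => rfl)

theorem Nat.sum_range_sum_range_choose_mul {R : Type*} [Semiring R] (n : ℕ) (g : ℕ → R) :
    ∑ j ∈ range n, ∑ l ∈ range (j + 1), (j.choose l : R) * g l =
      ∑ l ∈ range n, (n.choose (l + 1) : R) * g l := by
  induction n with
  | zero => simp
  | succ n ih =>
    simp only [sum_range_succ _ n, ih, Nat.choose_succ_succ', Nat.cast_add, add_mul,
      sum_add_distrib, Nat.choose_succ_self, Nat.cast_zero, zero_mul, add_zero]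
    abel

theorem sum_alternating_choose_add_sum_Icc_alternating_choose {R : Type*} [CommRing R]
    (n : ℕ) (f : ℕ → R) :
    ∑ l ∈ range (n + 1), (n.choose l : R) * (-1) ^ l * f l +
      ∑ k ∈ Icc 1 n, ∑ l ∈ range (n - k + 1), ((n - k).choose l : R) * (-1) ^ l * f (l + 1) =
      f 0 := by
  have hsublinear : ∑ k ∈ Icc 1 n, ∑ l ∈ range (n - k + 1),
        ((n - k).choose l : R) * (-1) ^ l * f (l + 1) =
      ∑ l ∈ range n, (n.choose (l + 1) : R) * ((-1) ^ l * f (l + 1)) := by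
    rw [sum_Icc_one_sub n (fun j => ∑ l ∈ range (j + 1), (j.choose l : R) * (-1) ^ l * f (l + 1)),
      ← Nat.sum_range_sum_range_choose_mul]
    simp only [mul_assoc]
  rw [hsublinear, sum_range_succ', ← add_rotate, ← sum_add_distrib]
  simp [pow_succ, mul_assoc]

theorem tsum_zero_pow_div_Gamma (ν : ℝ) :
    ∑' h : ℕ, (0 : ℝ) ^ h / Real.Gamma (ν * h + 1) = 1 := by
  rw [tsum_eq_single 0 fun h hh => by simp [zero_pow hh]]
  simp

theorem stmt_11_general (ν : ℝ) (μ : ℝ)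
    (n₀ : ℕ)
    (E : ℝ → ℝ) (hE : ∀ x, E x = ∑' h : ℕ, x ^ h / Real.Gamma (ν * h + 1))
    (t : ℝ) :
    (∑ l ∈ Finset.range (n₀ + 1), (n₀.choose l : ℝ) * (-1) ^ l * E (-((l : ℝ) * μ * t ^ ν))) +
      ∑ k ∈ Finset.Icc 1 n₀,
        ∑ l ∈ Finset.range (n₀ - k + 1),
          ((n₀ - k).choose l : ℝ) * (-1) ^ l * E (-(((l : ℝ) + 1) * μ * t ^ ν)) = 1 := by
  have hE₀ : E 0 = 1 := (hE 0).trans (tsum_zero_pow_div_Gamma ν)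
  simpa [hE₀] using
    sum_alternating_choose_add_sum_Icc_alternating_choose n₀ fun l => E (-((l : ℝ) * μ * t ^ ν))

theorem stmt_11 (ν : ℝ) (hν : ν ∈ Set.Ioc (0 : ℝ) 1) (μ : ℝ) (hμ : 0 < μ)
    (n₀ : ℕ) (hn : 1 ≤ n₀)
    (E : ℝ → ℝ) (hE : ∀ x, E x = ∑' h : ℕ, x ^ h / Real.Gamma (ν * h + 1))
    (t : ℝ) (ht : 0 < t) :
    (∑ l ∈ Finset.range (n₀ + 1), (n₀.choose l : ℝ) * (-1) ^ l * E (-((l : ℝ) * μ * t ^ ν))) +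
      ∑ k ∈ Finset.Icc 1 n₀,
        ∑ l ∈ Finset.range (n₀ - k + 1),
          ((n₀ - k).choose l : ℝ) * (-1) ^ l * E (-(((l : ℝ) + 1) * μ * t ^ ν)) = 1 :=
  stmt_11_general ν μ n₀ E hE t
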